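/- For a quantum Lie algebra, the elements Z_r defined by Z_2 = C_1 and Z_{r+1} = C_r + σ_r Z_r δ_{r+1} satisfy σ_m Z_r = Z_r σ_m for all m ≤ r-2, and have the explicit form Z_{r+1} = C_r + σ_r C_{r-1} δ_{r+1} + σ_r σ_{r-1} C_{r-2} δ_r δ_{r+1} + ... + σ_r σ_{r-1}···σ_2 C_1 δ_3···δ_{r+1}. -/

import Mathlib

/-!
Write `A ⊗ B` for the tensor product of operators on tensor powers of `V` (a reindexed Kronecker
product). An operator acting on a window of consecutive factors is `1 ⊗ X ⊗ 1`, so operators on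
disjoint windows commute, and the braid relation and the last axiom, which says that
`σ₁` commutes with `Z₃ = C₂ + σ₂C₁δ₃`, hold at every position.

The explicit formula is the recursion for `Z` unrolled. For `σ_m Z_r = Z_r σ_m` induct on `r`,
using `Z_r = C_{r-1} + σ_{r-1} Z_{r-1} δ_r`. If `m < r - 2`, both summands commute with `σ_m`:
`C_{r-1}` and `σ_{r-1}` act far from `σ_m`, and `Z_{r-1} δ_r` by induction. If `m = r - 2`,
expand once more: `Z_r = Z₃' + σ_{r-1} σ_{r-2} Z_{r-2} δ_{r-1} δ_r` with `Z₃'` a shifted `Z₃`,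
which commutes with `σ_{r-2}`. In the second summand the braid relation turns
`σ_{r-2}σ_{r-1}σ_{r-2}` into `σ_{r-1}σ_{r-2}σ_{r-1}`, and the last `σ_{r-1}` then passes
through `Z_{r-2} δ_{r-1} δ_r`, which is the identity on the two factors it swaps.
-/

section QuantumLie

variable {K : Type*} [CommRing K] {N : ℕ}

/-- Matrix of `σ` acting at (0-based) positions `n, n+1` of `V^{⊗t}` (identity on the
other factors); `σm` is the matrix of `σ : V ⊗ V → V ⊗ V`. -/
def qlSigma (σm : Matrix (Fin N × Fin N) (Fin N × Fin N) K) (t n : ℕ) :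
    Matrix (Fin t → Fin N) (Fin t → Fin N) K := fun x y =>
  if h : n + 1 < t then
    σm (x ⟨n, by omega⟩, x ⟨n + 1, h⟩) (y ⟨n, by omega⟩, y ⟨n + 1, h⟩) *
      ∏ i : Fin t, (if (i : ℕ) = n ∨ (i : ℕ) = n + 1 then 1
        else if x i = y i then (1 : K) else 0)
  else 0

/-- Matrix of `C : V ⊗ V → V` applied to the (0-based) factors `n, n+1` of `V^{⊗(t+1)}`
(identity on the other factors), a map `V^{⊗(t+1)} → V^{⊗t}`;
`Cc i j a = C^a_{ij}` are the structure constants. -/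
def qlC (Cc : Fin N → Fin N → Fin N → K) (t n : ℕ) :
    Matrix (Fin t → Fin N) (Fin (t + 1) → Fin N) K := fun x y =>
  if h : n < t then
    Cc (y ⟨n, by omega⟩) (y ⟨n + 1, by omega⟩) (x ⟨n, h⟩) *
      ∏ i : Fin t, (if (i : ℕ) = n then 1
        else if x i = y (if (i : ℕ) < n then i.castSucc else i.succ) then (1 : K) else 0)
  else 0

/-- Extension of an operator `V^{⊗b} → V^{⊗a}` by the identity on one extra trailing
tensor factor. -/
def qlExt {a b : ℕ} (M : Matrix (Fin a → Fin N) (Fin b → Fin N) K) :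
    Matrix (Fin (a + 1) → Fin N) (Fin (b + 1) → Fin N) K := fun x y =>
  (if x (Fin.last a) = y (Fin.last b) then (1 : K) else 0) *
    M (fun i => x i.castSucc) (fun j => y j.castSucc)

/-- The operators `Z_r : V^{⊗r} → V^{⊗(r-1)}` of a quantum Lie algebra, defined by
`Z_2 = C_1` and `Z_{r+1} = C_r + σ_r Z_r δ_{r+1}` (here `qlZ σm Cc k = Z_{k+2}`;
operator words are read left to right, so `σ_r Z_r δ_{r+1}` has matrix
`qlExt (Z_r) * Mat(σ_r)`). -/
def qlZ (σm : Matrix (Fin N × Fin N) (Fin N × Fin N) K)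
    (Cc : Fin N → Fin N → Fin N → K) :
    (k : ℕ) → Matrix (Fin (k + 1) → Fin N) (Fin (k + 2) → Fin N) K
  | 0 => qlC Cc 1 0
  | k + 1 => qlC Cc (k + 2) (k + 1) + qlExt (qlZ σm Cc k) * qlSigma σm (k + 3) (k + 1)

end QuantumLie

open Matrix Finset
open scoped Kronecker

lemma Matrix.one_apply_eq_prod {ι α R : Type*} [Fintype ι] [DecidableEq α] [CommMonoidWithZero R]
    (x y : ι → α) :
    (1 : Matrix (ι → α) (ι → α) R) x y = ∏ i, if x i = y i then 1 else 0 := by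
  simp [one_apply, Fintype.prod_boole, funext_iff]

section Tensor

variable {K : Type*} [CommRing K] {N : ℕ}

def qlTmul {u v c d : ℕ} (A : Matrix (Fin u → Fin N) (Fin v → Fin N) K)
    (B : Matrix (Fin c → Fin N) (Fin d → Fin N) K) :
    Matrix (Fin (u + c) → Fin N) (Fin (v + d) → Fin N) K :=
  (A ⊗ₖ B).submatrix (Fin.appendEquiv u c).symm (Fin.appendEquiv v d).symm

lemma qlTmul_apply {u v c d : ℕ} (A : Matrix (Fin u → Fin N) (Fin v → Fin N) K)
    (B : Matrix (Fin c → Fin N) (Fin d → Fin N) K) (x : Fin (u + c) → Fin N)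
    (y : Fin (v + d) → Fin N) :
    qlTmul A B x y = A (fun i => x (Fin.castAdd c i)) (fun i => y (Fin.castAdd d i)) *
      B (fun i => x (Fin.natAdd u i)) (fun i => y (Fin.natAdd v i)) := rfl

lemma qlTmul_mul_qlTmul {u v w c d e : ℕ} (A : Matrix (Fin u → Fin N) (Fin v → Fin N) K)
    (B : Matrix (Fin c → Fin N) (Fin d → Fin N) K)
    (A' : Matrix (Fin v → Fin N) (Fin w → Fin N) K)
    (B' : Matrix (Fin d → Fin N) (Fin e → Fin N) K) :
    qlTmul A B * qlTmul A' B' = qlTmul (A * A') (B * B') := by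
  rw [qlTmul, qlTmul, submatrix_mul_equiv, ← mul_kronecker_mul, qlTmul]

lemma qlTmul_one_one {u c : ℕ} :
    qlTmul (1 : Matrix (Fin u → Fin N) (Fin u → Fin N) K)
      (1 : Matrix (Fin c → Fin N) (Fin c → Fin N) K) = 1 := by
  rw [qlTmul, one_kronecker_one, submatrix_one_equiv]

lemma qlTmul_add {u v c d : ℕ} (A : Matrix (Fin u → Fin N) (Fin v → Fin N) K)
    (B B' : Matrix (Fin c → Fin N) (Fin d → Fin N) K) :
    qlTmul A (B + B') = qlTmul A B + qlTmul A B' := by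
  rw [qlTmul, kronecker_add]
  rfl

lemma qlTmul_one_mul {p a b c : ℕ} (X : Matrix (Fin a → Fin N) (Fin b → Fin N) K)
    (Y : Matrix (Fin b → Fin N) (Fin c → Fin N) K) :
    qlTmul (1 : Matrix (Fin p → Fin N) (Fin p → Fin N) K) (X * Y) =
      qlTmul (1 : Matrix (Fin p → Fin N) (Fin p → Fin N) K) X *
        qlTmul (1 : Matrix (Fin p → Fin N) (Fin p → Fin N) K) Y := by
  rw [qlTmul_mul_qlTmul, Matrix.one_mul]

lemma qlTmul_one_comm {u v c d : ℕ} (A : Matrix (Fin u → Fin N) (Fin v → Fin N) K)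
    (B : Matrix (Fin c → Fin N) (Fin d → Fin N) K) :
    qlTmul A (1 : Matrix (Fin c → Fin N) (Fin c → Fin N) K) *
        qlTmul (1 : Matrix (Fin v → Fin N) (Fin v → Fin N) K) B =
      qlTmul (1 : Matrix (Fin u → Fin N) (Fin u → Fin N) K) B *
        qlTmul A (1 : Matrix (Fin d → Fin N) (Fin d → Fin N) K) := by
  rw [qlTmul_mul_qlTmul, qlTmul_mul_qlTmul, Matrix.one_mul, Matrix.mul_one, Matrix.one_mul,
    Matrix.mul_one]

lemma qlExt_qlTmul {u v c d : ℕ} (A : Matrix (Fin u → Fin N) (Fin v → Fin N) K)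
    (B : Matrix (Fin c → Fin N) (Fin d → Fin N) K) :
    qlExt (qlTmul A B) = qlTmul A (qlExt B) := by
  ext x y
  simp only [qlExt, qlTmul_apply, Fin.natAdd_last, Fin.natAdd_castSucc, Fin.castSucc_castAdd]
  ring

lemma qlExt_eq_qlTmul {a b : ℕ} (M : Matrix (Fin a → Fin N) (Fin b → Fin N) K) :
    qlExt M = qlTmul M (1 : Matrix (Fin 1 → Fin N) (Fin 1 → Fin N) K) := by
  ext x y
  simp only [qlExt, qlTmul_apply, one_apply, funext_iff, Fin.forall_fin_one]
  rw [mul_comm]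
  rfl

lemma qlExt_one {t : ℕ} : qlExt (1 : Matrix (Fin t → Fin N) (Fin t → Fin N) K) = 1 := by
  rw [qlExt_eq_qlTmul, qlTmul_one_one]

lemma qlExt_mul {a b c : ℕ} (A : Matrix (Fin a → Fin N) (Fin b → Fin N) K)
    (B : Matrix (Fin b → Fin N) (Fin c → Fin N) K) :
    qlExt (A * B) = qlExt A * qlExt B := by
  rw [qlExt_eq_qlTmul, qlExt_eq_qlTmul, qlExt_eq_qlTmul, qlTmul_mul_qlTmul, Matrix.one_mul]

lemma qlExt_add {a b : ℕ} (A B : Matrix (Fin a → Fin N) (Fin b → Fin N) K) :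
    qlExt (A + B) = qlExt A + qlExt B := by
  ext x y
  simp only [qlExt, Matrix.add_apply, mul_add]

lemma qlExt_sum {a b : ℕ} {ι : Type*} (s : Finset ι)
    (f : ι → Matrix (Fin a → Fin N) (Fin b → Fin N) K) :
    qlExt (∑ i ∈ s, f i) = ∑ i ∈ s, qlExt (f i) :=
  map_sum (AddMonoidHom.mk' qlExt qlExt_add) f s

lemma qlExt_list_prod {t : ℕ} (l : List (Matrix (Fin t → Fin N) (Fin t → Fin N) K)) :
    qlExt l.prod = (l.map qlExt).prod :=
  map_list_prod (⟨⟨qlExt, qlExt_one⟩, qlExt_mul⟩ : _ →* Matrix (Fin (t + 1) → Fin N) _ K) l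

lemma qlExt_qlExt_eq_qlTmul {a b : ℕ} (M : Matrix (Fin a → Fin N) (Fin b → Fin N) K) :
    qlExt (qlExt M) = qlTmul M (1 : Matrix (Fin 2 → Fin N) (Fin 2 → Fin N) K) := by
  rw [qlExt_eq_qlTmul M, qlExt_qlTmul, qlExt_one]

lemma qlTmul_one_qlSigma (σm : Matrix (Fin N × Fin N) (Fin N × Fin N) K) {p w n : ℕ}
    (h : n + 1 < w) :
    qlTmul (1 : Matrix (Fin p → Fin N) (Fin p → Fin N) K) (qlSigma σm w n) =
      qlSigma σm (p + w) (p + n) := by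
  ext x y
  have h' : p + n + 1 < p + w := by omega
  rw [qlTmul_apply, qlSigma, qlSigma, dif_pos h, dif_pos h', one_apply_eq_prod,
    Fin.prod_univ_add, mul_left_comm]
  have hlow : ∀ i : Fin p,
      ¬ ((Fin.castAdd w i : ℕ) = p + n ∨ (Fin.castAdd w i : ℕ) = p + n + 1) :=
    fun i => by simp only [Fin.val_castAdd]; omega
  simp only [hlow, if_false, Fin.val_natAdd]
  simp only [add_assoc, Nat.add_left_cancel_iff]
  rfl

lemma qlTmul_qlSigma_one (σm : Matrix (Fin N × Fin N) (Fin N × Fin N) K) {w c n : ℕ}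
    (h : n + 1 < w) :
    qlTmul (qlSigma σm w n) (1 : Matrix (Fin c → Fin N) (Fin c → Fin N) K) =
      qlSigma σm (w + c) n := by
  ext x y
  have h' : n + 1 < w + c := by omega
  rw [qlTmul_apply, qlSigma, qlSigma, dif_pos h, dif_pos h', one_apply_eq_prod,
    Fin.prod_univ_add, mul_assoc]
  have hhigh : ∀ i : Fin c, ¬ ((Fin.natAdd w i : ℕ) = n ∨ (Fin.natAdd w i : ℕ) = n + 1) :=
    fun i => by simp only [Fin.val_natAdd]; omega
  simp only [hhigh, if_false, Fin.val_castAdd]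
  rfl

lemma qlTmul_one_qlC (Cc : Fin N → Fin N → Fin N → K) {p w n : ℕ} (h : n < w) :
    qlTmul (1 : Matrix (Fin p → Fin N) (Fin p → Fin N) K) (qlC Cc w n) =
      qlC Cc (p + w) (p + n) := by
  ext x y
  have h' : p + n < p + w := by omega
  rw [qlTmul_apply, qlC, qlC, dif_pos h, dif_pos h', one_apply_eq_prod, Fin.prod_univ_add,
    mul_left_comm]
  have hlow : ∀ i : Fin p, (Fin.castAdd w i : ℕ) ≠ p + n ∧ (Fin.castAdd w i : ℕ) < p + n :=
    fun i => by simp only [Fin.val_castAdd]; omega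
  simp only [hlow, if_false, if_true, Fin.val_natAdd, Nat.add_left_cancel_iff,
    Nat.add_lt_add_iff_left]
  congr 2
  refine Finset.prod_congr rfl fun i _ => ?_
  -- the two sides index `y` by `Fin.natAdd` and `Fin.castSucc`/`Fin.succ` in opposite orders,
  -- which agree definitionally
  split_ifs <;> first | rfl | contradiction

lemma qlExt_qlC (Cc : Fin N → Fin N → Fin N → K) {t n : ℕ} (h : n < t) :
    qlExt (qlC Cc t n) = qlC Cc (t + 1) n := by
  ext x y
  have h' : n < t + 1 := by omega
  have hlast : ¬ ((Fin.last t : ℕ) = n ∨ (Fin.last t : ℕ) < n) := by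
    simp only [Fin.val_last]; omega
  rw [qlExt, qlC, qlC, dif_pos h, dif_pos h', Fin.prod_univ_castSucc, mul_left_comm]
  simp only [not_or.mp hlast, if_false, Fin.val_castSucc]
  rw [mul_comm (∏ i : Fin t, _)]
  congr 2
  refine Finset.prod_congr rfl fun i _ => ?_
  split_ifs <;> first | rfl | contradiction

lemma qlExt_qlSigma (σm : Matrix (Fin N × Fin N) (Fin N × Fin N) K) {t n : ℕ}
    (h : n + 1 < t) :
    qlExt (qlSigma σm t n) = qlSigma σm (t + 1) n := by
  rw [qlExt_eq_qlTmul, qlTmul_qlSigma_one σm h]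

end Tensor

section QuantumLieZ

variable {K : Type*} [CommRing K] {N : ℕ}
  (σm : Matrix (Fin N × Fin N) (Fin N × Fin N) K) (Cc : Fin N → Fin N → Fin N → K)

lemma qlC_mul_qlSigma_of_lt {t c a : ℕ} (hac : a + 1 < c) (hct : c < t) :
    qlC Cc t c * qlSigma σm (t + 1) a = qlSigma σm t a * qlC Cc t c := by
  obtain ⟨f, rfl⟩ : ∃ f, c = a + 2 + f := ⟨c - (a + 2), by omega⟩
  obtain ⟨w, rfl⟩ : ∃ w, t = a + 2 + w := ⟨t - (a + 2), by omega⟩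
  have hC : qlC Cc (a + 2 + w) (a + 2 + f) =
      qlTmul (1 : Matrix (Fin (a + 2) → Fin N) (Fin (a + 2) → Fin N) K) (qlC Cc w f) :=
    (qlTmul_one_qlC Cc (by omega)).symm
  have hσ : qlSigma σm (a + 2 + w + 1) a =
      qlTmul (qlSigma σm (a + 2) a)
        (1 : Matrix (Fin (w + 1) → Fin N) (Fin (w + 1) → Fin N) K) :=
    (qlTmul_qlSigma_one (w := a + 2) (c := w + 1) (n := a) σm (by omega)).symm
  have hσ' : qlSigma σm (a + 2 + w) a =
      qlTmul (qlSigma σm (a + 2) a) (1 : Matrix (Fin w → Fin N) (Fin w → Fin N) K) :=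
    (qlTmul_qlSigma_one (w := a + 2) (n := a) σm (by omega)).symm
  rw [hC, hσ, hσ', qlTmul_one_comm]

lemma qlSigma_mul_qlSigma_of_lt {t b a : ℕ} (hab : a + 1 < b) (hbt : b + 1 < t) :
    qlSigma σm t b * qlSigma σm t a = qlSigma σm t a * qlSigma σm t b := by
  obtain ⟨f, rfl⟩ : ∃ f, b = a + 2 + f := ⟨b - (a + 2), by omega⟩
  obtain ⟨w, rfl⟩ : ∃ w, t = a + 2 + w := ⟨t - (a + 2), by omega⟩
  rw [← qlTmul_one_qlSigma σm (show f + 1 < w by omega),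
    ← qlTmul_qlSigma_one σm (show a + 1 < a + 2 by omega), qlTmul_one_comm]

lemma qlExt_qlExt_mul_qlSigma {u v : ℕ} (M : Matrix (Fin u → Fin N) (Fin v → Fin N) K) :
    qlExt (qlExt M) * qlSigma σm (v + 2) v = qlSigma σm (u + 2) u * qlExt (qlExt M) := by
  have hσ : ∀ p, qlSigma σm (p + 2) p =
      qlTmul (1 : Matrix (Fin p → Fin N) (Fin p → Fin N) K) (qlSigma σm 2 0) :=
    fun p => (qlTmul_one_qlSigma σm (show 0 + 1 < 2 by norm_num)).symm
  rw [qlExt_qlExt_eq_qlTmul, hσ v, hσ u, qlTmul_one_comm]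

lemma qlSigma_braid (hbraid : qlSigma σm 3 0 * qlSigma σm 3 1 * qlSigma σm 3 0 =
      qlSigma σm 3 1 * qlSigma σm 3 0 * qlSigma σm 3 1) (p : ℕ) :
    qlSigma σm (p + 3) p * qlSigma σm (p + 3) (p + 1) * qlSigma σm (p + 3) p =
      qlSigma σm (p + 3) (p + 1) * qlSigma σm (p + 3) p * qlSigma σm (p + 3) (p + 1) := by
  have h := congrArg (qlTmul (1 : Matrix (Fin p → Fin N) (Fin p → Fin N) K)) hbraid
  simpa only [qlTmul_one_mul, qlTmul_one_qlSigma σm (show 0 + 1 < 3 by norm_num),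
    qlTmul_one_qlSigma σm (show 1 + 1 < 3 by norm_num), add_zero] using h

lemma qlZ_one : qlZ σm Cc 1 = qlC Cc 2 0 * qlSigma σm 3 1 + qlC Cc 2 1 := by
  show qlC Cc 2 1 + qlExt (qlC Cc 1 0) * qlSigma σm 3 1 = _
  rw [qlExt_qlC Cc one_pos]
  exact add_comm _ _

lemma qlTmul_one_qlZ_one (p : ℕ) :
    qlTmul (1 : Matrix (Fin p → Fin N) (Fin p → Fin N) K) (qlZ σm Cc 1) =
      qlC Cc (p + 2) p * qlSigma σm (p + 3) (p + 1) + qlC Cc (p + 2) (p + 1) := by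
  have hC₀ : qlTmul (1 : Matrix (Fin p → Fin N) (Fin p → Fin N) K) (qlC Cc 2 0) =
      qlC Cc (p + 2) p :=
    qlTmul_one_qlC Cc (by norm_num)
  have hC₁ : qlTmul (1 : Matrix (Fin p → Fin N) (Fin p → Fin N) K) (qlC Cc 2 1) =
      qlC Cc (p + 2) (p + 1) :=
    qlTmul_one_qlC Cc (by norm_num)
  have hσ : qlTmul (1 : Matrix (Fin p → Fin N) (Fin p → Fin N) K) (qlSigma σm 3 1) =
      qlSigma σm (p + 3) (p + 1) :=
    qlTmul_one_qlSigma σm (by norm_num)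
  rw [qlZ_one, qlTmul_add, qlTmul_one_mul, hC₀, hC₁, hσ]

lemma qlZ_succ_succ (i : ℕ) :
    qlZ σm Cc (i + 2) =
      qlTmul (1 : Matrix (Fin (i + 1) → Fin N) (Fin (i + 1) → Fin N) K) (qlZ σm Cc 1) +
        qlExt (qlExt (qlZ σm Cc i)) *
          (qlSigma σm (i + 4) (i + 1) * qlSigma σm (i + 4) (i + 2)) := by
  have hE : qlExt (qlZ σm Cc (i + 1)) = qlC Cc (i + 3) (i + 1) +
      qlExt (qlExt (qlZ σm Cc i)) * qlSigma σm (i + 4) (i + 1) := by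
    show qlExt (qlC Cc (i + 2) (i + 1) + qlExt (qlZ σm Cc i) * qlSigma σm (i + 3) (i + 1)) = _
    rw [qlExt_add, qlExt_mul, qlExt_qlC Cc (by omega), qlExt_qlSigma σm (by omega)]
  show qlC Cc (i + 3) (i + 2) + qlExt (qlZ σm Cc (i + 1)) * qlSigma σm (i + 4) (i + 2) = _
  rw [hE, qlTmul_one_qlZ_one, Matrix.add_mul, Matrix.mul_assoc]
  abel

lemma qlZ_one_mul_qlSigma
    (hrel4 : qlSigma σm 2 0 * (qlC Cc 2 0 * qlSigma σm 3 1 + qlC Cc 2 1) =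
      (qlC Cc 2 0 * qlSigma σm 3 1 + qlC Cc 2 1) * qlSigma σm 3 0) :
    qlZ σm Cc 1 * qlSigma σm 3 0 = qlSigma σm 2 0 * qlZ σm Cc 1 := by
  rw [qlZ_one, hrel4]

lemma qlZ_succ_mul_qlSigma_of_lt {j a : ℕ} (haj : a < j)
    (hZ : qlZ σm Cc j * qlSigma σm (j + 2) a = qlSigma σm (j + 1) a * qlZ σm Cc j) :
    qlZ σm Cc (j + 1) * qlSigma σm (j + 3) a = qlSigma σm (j + 2) a * qlZ σm Cc (j + 1) := by
  have hExt : qlExt (qlZ σm Cc j) * qlSigma σm (j + 3) a =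
      qlSigma σm (j + 2) a * qlExt (qlZ σm Cc j) := by
    rw [← qlExt_qlSigma σm (show a + 1 < j + 2 by omega), ← qlExt_mul, hZ, qlExt_mul,
      qlExt_qlSigma σm (show a + 1 < j + 1 by omega)]
  show (qlC Cc (j + 2) (j + 1) + qlExt (qlZ σm Cc j) * qlSigma σm (j + 3) (j + 1)) *
      qlSigma σm (j + 3) a = qlSigma σm (j + 2) a *
      (qlC Cc (j + 2) (j + 1) + qlExt (qlZ σm Cc j) * qlSigma σm (j + 3) (j + 1))
  rw [Matrix.add_mul, qlC_mul_qlSigma_of_lt σm Cc (by omega) (by omega), Matrix.mul_assoc,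
    qlSigma_mul_qlSigma_of_lt σm (by omega) (by omega), ← Matrix.mul_assoc, hExt,
    Matrix.mul_assoc, Matrix.mul_add]

lemma qlTmul_one_qlZ_one_mul_qlSigma
    (hZ₁ : qlZ σm Cc 1 * qlSigma σm 3 0 = qlSigma σm 2 0 * qlZ σm Cc 1) (p : ℕ) :
    qlTmul (1 : Matrix (Fin p → Fin N) (Fin p → Fin N) K) (qlZ σm Cc 1) *
        qlSigma σm (p + 3) p =
      qlSigma σm (p + 2) p *
        qlTmul (1 : Matrix (Fin p → Fin N) (Fin p → Fin N) K) (qlZ σm Cc 1) := by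
  have hσ₃ : qlTmul (1 : Matrix (Fin p → Fin N) (Fin p → Fin N) K) (qlSigma σm 3 0) =
      qlSigma σm (p + 3) p :=
    qlTmul_one_qlSigma σm (by norm_num)
  have hσ₂ : qlTmul (1 : Matrix (Fin p → Fin N) (Fin p → Fin N) K) (qlSigma σm 2 0) =
      qlSigma σm (p + 2) p :=
    qlTmul_one_qlSigma σm (by norm_num)
  rw [← hσ₃, ← hσ₂, ← qlTmul_one_mul, ← qlTmul_one_mul, hZ₁]

lemma qlZ_add_two_mul_qlSigma
    (hbraid : qlSigma σm 3 0 * qlSigma σm 3 1 * qlSigma σm 3 0 =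
      qlSigma σm 3 1 * qlSigma σm 3 0 * qlSigma σm 3 1)
    (hZ₁ : qlZ σm Cc 1 * qlSigma σm 3 0 = qlSigma σm 2 0 * qlZ σm Cc 1) (i : ℕ) :
    qlZ σm Cc (i + 2) * qlSigma σm (i + 4) (i + 1) =
      qlSigma σm (i + 3) (i + 1) * qlZ σm Cc (i + 2) := by
  have hW := qlTmul_one_qlZ_one_mul_qlSigma σm Cc hZ₁ (i + 1)
  have hB := qlSigma_braid σm hbraid (i + 1)
  have hD := qlExt_qlExt_mul_qlSigma σm (qlZ σm Cc i)
  rw [qlZ_succ_succ, Matrix.add_mul, hW, Matrix.mul_assoc (qlExt (qlExt _)), hB,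
    Matrix.mul_assoc (qlSigma σm _ _), ← Matrix.mul_assoc (qlExt (qlExt _)), hD,
    Matrix.mul_assoc, ← Matrix.mul_add]

lemma qlZ_mul_qlSigma
    (hbraid : qlSigma σm 3 0 * qlSigma σm 3 1 * qlSigma σm 3 0 =
      qlSigma σm 3 1 * qlSigma σm 3 0 * qlSigma σm 3 1)
    (hrel4 : qlSigma σm 2 0 * (qlC Cc 2 0 * qlSigma σm 3 1 + qlC Cc 2 1) =
      (qlC Cc 2 0 * qlSigma σm 3 1 + qlC Cc 2 1) * qlSigma σm 3 0)
    {k a : ℕ} (hak : a < k) :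
    qlZ σm Cc k * qlSigma σm (k + 2) a = qlSigma σm (k + 1) a * qlZ σm Cc k := by
  induction k generalizing a with
  | zero => exact absurd hak (Nat.not_lt_zero a)
  | succ j ih =>
    rcases Nat.lt_succ_iff_lt_or_eq.mp hak with haj | rfl
    · exact qlZ_succ_mul_qlSigma_of_lt σm Cc haj (ih haj)
    · rcases a with _ | i
      · exact qlZ_one_mul_qlSigma σm Cc hrel4
      · exact qlZ_add_two_mul_qlSigma σm Cc hbraid (qlZ_one_mul_qlSigma σm Cc hrel4) i

lemma qlExt_prod_qlSigma {t s l : ℕ} (h : s + l + 2 ≤ t) :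
    qlExt ((List.range l).map fun i => qlSigma σm t (s + 1 + i)).prod =
      ((List.range l).map fun i => qlSigma σm (t + 1) (s + 1 + i)).prod := by
  rw [qlExt_list_prod, List.map_map]
  refine congrArg _ (List.map_congr_left fun i hi => qlExt_qlSigma σm ?_)
  have := List.mem_range.mp hi
  omega

lemma qlZ_eq_sum (k : ℕ) :
    qlZ σm Cc k = ∑ s ∈ range (k + 1), qlC Cc (k + 1) s *
      ((List.range (k - s)).map fun i => qlSigma σm (k + 2) (s + 1 + i)).prod := by
  induction k with
  | zero => simp [qlZ]
  | succ k ih =>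
    have hterm : ∀ s ∈ range (k + 1),
        qlExt (qlC Cc (k + 1) s *
            ((List.range (k - s)).map fun i => qlSigma σm (k + 2) (s + 1 + i)).prod) *
          qlSigma σm (k + 3) (k + 1) =
        qlC Cc (k + 2) s *
          ((List.range (k + 1 - s)).map fun i => qlSigma σm (k + 3) (s + 1 + i)).prod := by
      intro s hs
      have hs : s ≤ k := Nat.lt_succ_iff.mp (mem_range.mp hs)
      rw [qlExt_mul, qlExt_qlC Cc (by omega), qlExt_prod_qlSigma σm (by omega),
        Matrix.mul_assoc, Nat.sub_add_comm hs, List.range_succ, List.map_append,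
        List.prod_append, List.map_singleton, List.prod_singleton,
        show s + 1 + (k - s) = k + 1 by omega]
    show qlC Cc (k + 2) (k + 1) + qlExt (qlZ σm Cc k) * qlSigma σm (k + 3) (k + 1) = _
    rw [ih, qlExt_sum, Matrix.sum_mul, Finset.sum_congr rfl hterm,
      Finset.sum_range_succ _ (k + 1), Nat.sub_self, List.range_zero, List.map_nil,
      List.prod_nil, Matrix.mul_one]
    exact add_comm _ _

end QuantumLieZ

theorem quantumLie_Z_properties_general {K : Type*} [CommRing K] {N : ℕ}
    (σm : Matrix (Fin N × Fin N) (Fin N × Fin N) K)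
    (Cc : Fin N → Fin N → Fin N → K)
    (hbraid : qlSigma σm 3 0 * qlSigma σm 3 1 * qlSigma σm 3 0 =
      qlSigma σm 3 1 * qlSigma σm 3 0 * qlSigma σm 3 1)
    (hrel4 : qlSigma σm 2 0 * (qlC Cc 2 0 * qlSigma σm 3 1 + qlC Cc 2 1) =
      (qlC Cc 2 0 * qlSigma σm 3 1 + qlC Cc 2 1) * qlSigma σm 3 0) :
    (∀ k m : ℕ, 1 ≤ m → m ≤ k →
      qlZ σm Cc k * qlSigma σm (k + 2) (m - 1) =
        qlSigma σm (k + 1) (m - 1) * qlZ σm Cc k) ∧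
    (∀ k : ℕ, qlZ σm Cc k =
      ∑ s ∈ Finset.range (k + 1), qlC Cc (k + 1) s *
        ((List.range (k - s)).map (fun i => qlSigma σm (k + 2) (s + 1 + i))).prod) :=
  ⟨fun _ _ hm hmk => qlZ_mul_qlSigma σm Cc hbraid hrel4 (by omega), qlZ_eq_sum σm Cc⟩

/-- For a quantum Lie algebra (structure tensors `σ`, `C` satisfying the braid relation,
the quantum Jacobi identity, `C₁δ₃σ₁ = σ₂σ₁C₂` and `(σ₂C₁δ₃+C₂)σ₁ = σ₁(σ₂C₁δ₃+C₂)`;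
operator words are read left to right, so a word `X Y` has matrix `Mat(Y) * Mat(X)`),
the elements `Z_r` defined by `Z_2 = C_1`, `Z_{r+1} = C_r + σ_r Z_r δ_{r+1}` satisfy
`σ_m Z_r = Z_r σ_m` for `1 ≤ m ≤ r-2` and have the explicit form
`Z_{r+1} = C_r + σ_r C_{r-1} δ_{r+1} + σ_r σ_{r-1} C_{r-2} δ_r δ_{r+1} + ⋯ +
σ_r σ_{r-1} ⋯ σ_2 C_1 δ_3 ⋯ δ_{r+1}`
(in the sum below, `s` is the 0-based position of the `C` factor, `Z_{k+2} = qlZ k`,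
and 1-based `σ_j` corresponds to `qlSigma _ _ (j-1)`). -/
theorem quantumLie_Z_properties {K : Type*} [CommRing K] {N : ℕ}
    (σm : Matrix (Fin N × Fin N) (Fin N × Fin N) K)
    (Cc : Fin N → Fin N → Fin N → K)
    (hbraid : qlSigma σm 3 0 * qlSigma σm 3 1 * qlSigma σm 3 0 =
      qlSigma σm 3 1 * qlSigma σm 3 0 * qlSigma σm 3 1)
    (hjacobi : qlC Cc 1 0 * qlC Cc 2 0 =
      qlC Cc 1 0 * qlC Cc 2 0 * qlSigma σm 3 1 + qlC Cc 1 0 * qlC Cc 2 1)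
    (hrel3 : qlSigma σm 2 0 * qlC Cc 2 0 =
      qlC Cc 2 1 * qlSigma σm 3 0 * qlSigma σm 3 1)
    (hrel4 : qlSigma σm 2 0 * (qlC Cc 2 0 * qlSigma σm 3 1 + qlC Cc 2 1) =
      (qlC Cc 2 0 * qlSigma σm 3 1 + qlC Cc 2 1) * qlSigma σm 3 0) :
    (∀ k m : ℕ, 1 ≤ m → m ≤ k →
      qlZ σm Cc k * qlSigma σm (k + 2) (m - 1) =
        qlSigma σm (k + 1) (m - 1) * qlZ σm Cc k) ∧
    (∀ k : ℕ, qlZ σm Cc k =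
      ∑ s ∈ Finset.range (k + 1), qlC Cc (k + 1) s *
        ((List.range (k - s)).map (fun i => qlSigma σm (k + 2) (s + 1 + i))).prod) :=
  quantumLie_Z_properties_general σm Cc hbraid hrel4
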